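/- Suppose (μ, m) has critical root structure with roots 0 < t_1 < … < t_k < 1 of orders v_1, …, v_k, and set v = max_{1 ≤ l ≤ k} v_l. Then there exist constants C > 0 and h₀ > 0 such that for every h ∈ (0, h₀] and every integer N ≥ 1: card{i ∈ {1,…,N} : |μ(i/N) − m| ≤ h} ≤ C·(N·h^{1/(v+1)} + 1). -/

import Mathlib

open MeasureTheory Set

/-- The extended root sequence: `t₀ = 0`, `t_{k+1} = 1`, and the given roots in between. -/
noncomputable def extRoots (k : ℕ) (t : ℕ → ℝ) : ℕ → ℝ :=
  fun i => if i = 0 then 0 else if i ≤ k then t i else 1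

/-- `(μ, m)` has critical root structure with roots `0 < t 1 < … < t k < 1` of orders
`v 1, …, v k` and gap parameter `γ = (1/2)·min_{0 ≤ i ≤ k} (t_{i+1} - t_i)`
(with the convention `t 0 = 0`, `t (k+1) = 1`). -/
structure CriticalRootStructure (μ : ℝ → ℝ) (m : ℝ) (k : ℕ) (t : ℕ → ℝ)
    (v : ℕ → ℕ) (γ : ℝ) : Prop where
  k_pos : 0 < k
  mono : ∀ i j, 1 ≤ i → i < j → j ≤ k → t i < t j
  first_pos : 0 < t 1
  last_lt : t k < 1
  gamma_eq : γ = (1 / 2) * ((Finset.Icc 0 k).inf' (Finset.nonempty_Icc.mpr (Nat.zero_le k))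
      fun i => extRoots k t (i + 1) - extRoots k t i)
  root : ∀ l, 1 ≤ l → l ≤ k → μ (t l) = m
  -- (i) μ is (v l + 1)-times differentiable on [t l - γ, t l + γ] ...
  diffble : ∀ l, 1 ≤ l → l ≤ k → ∀ j ≤ v l,
      DifferentiableOn ℝ (iteratedDerivWithin j μ (Icc (t l - γ) (t l + γ)))
        (Icc (t l - γ) (t l + γ))
  -- ... with μ^{(j)}(t l) = 0 for 1 ≤ j ≤ v l ...
  deriv_zero : ∀ l, 1 ≤ l → l ≤ k → ∀ j, 1 ≤ j → j ≤ v l →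
      iteratedDerivWithin j μ (Icc (t l - γ) (t l + γ)) (t l) = 0
  -- ... μ^{(v l + 1)}(t l) ≠ 0 ...
  deriv_ne : ∀ l, 1 ≤ l → l ≤ k →
      iteratedDerivWithin (v l + 1) μ (Icc (t l - γ) (t l + γ)) (t l) ≠ 0
  -- ... and μ^{(v l + 1)} Lipschitz continuous on [t l - γ, t l + γ].
  deriv_lip : ∀ l, 1 ≤ l → l ≤ k → ∃ C : NNReal,
      LipschitzOnWith C (iteratedDerivWithin (v l + 1) μ (Icc (t l - γ) (t l + γ)))
        (Icc (t l - γ) (t l + γ))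
  -- (ii) μ strictly monotone on [t l - γ, t l] and on [t l, t l + γ].
  mono_left : ∀ l, 1 ≤ l → l ≤ k →
      StrictMonoOn μ (Icc (t l - γ) (t l)) ∨ StrictAntiOn μ (Icc (t l - γ) (t l))
  mono_right : ∀ l, 1 ≤ l → l ≤ k →
      StrictMonoOn μ (Icc (t l) (t l + γ)) ∨ StrictAntiOn μ (Icc (t l) (t l + γ))
  -- (iii) |μ - m| bounded away from 0 outside the γ-neighbourhoods of the roots.
  sep : ∃ ε > 0, ∀ s ∈ Icc (0:ℝ) 1,
      (∀ l, 1 ≤ l → l ≤ k → γ < |s - t l|) → ε ≤ |μ s - m|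

/-! Near a root `t l` of order `v l` the derivative of order `v l + 1` has a fixed sign, so
integrating it `v l + 1` times from `t l` (on the left after reflecting) gives
`|μ s - m| ≥ c |s - t l| ^ (v l + 1)` close to `t l`, hence also with the exponent `v + 1`;
compactness and strict monotonicity extend this to the whole `γ`-neighbourhood. Away from these
neighbourhoods `|μ - m| ≥ ε`. So for `h < ε` every grid point of the band lies within
`R = (h / c) ^ (1 / (v + 1))` of a root, and an interval of length `2R` contains at most `2NR + 1`
points of `ℕ / N`. -/

open Filter Topology
open scoped Nat Finset

lemma hasDerivAt_mul_sub_pow_div_factorial (c a x : ℝ) (n : ℕ) :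
    HasDerivAt (fun y => c * (y - a) ^ (n + 1) / (n + 1)!) (c * (x - a) ^ n / n !) x := by
  have h := ((((hasDerivAt_id x).sub_const a).pow (n + 1)).const_mul c).div_const ((n + 1)! : ℝ)
  refine h.congr_deriv ?_
  rw [Nat.factorial_succ, Nat.add_sub_cancel]
  push_cast
  field_simp
  simp

lemma mul_pow_div_factorial_le_sub_of_hasDerivAt {F F' : ℝ → ℝ} {a b c : ℝ} (n : ℕ) (hab : a ≤ b)
    (hF : ContinuousOn F (Icc a b)) (hF' : ∀ x ∈ Ioo a b, HasDerivAt F (F' x) x)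
    (hle : ∀ x ∈ Ioo a b, c * (x - a) ^ n / n ! ≤ F' x) :
    c * (b - a) ^ (n + 1) / (n + 1)! ≤ F b - F a := by
  set P : ℝ → ℝ := fun y => c * (y - a) ^ (n + 1) / (n + 1)!
  have hmono : MonotoneOn (fun y => F y - P y) (Icc a b) := by
    refine monotoneOn_of_hasDerivWithinAt_nonneg (f' := fun x => F' x - c * (x - a) ^ n / n !)
      (convex_Icc a b)
      (hF.sub (by fun_prop)) (fun x hx => ?_) (fun x hx => ?_)
    · rw [interior_Icc] at hx ⊢
      exact ((hF' x hx).sub (hasDerivAt_mul_sub_pow_div_factorial c a x n)).hasDerivWithinAt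
    · rw [interior_Icc] at hx
      exact sub_nonneg.2 (hle x hx)
  have := hmono (left_mem_Icc.2 hab) (right_mem_Icc.2 hab) hab
  simp only [P, sub_self, zero_pow n.succ_ne_zero, mul_zero, zero_div, sub_zero] at this
  linarith

lemma mul_pow_div_factorial_le_sub_of_hasDerivAt_chain (n : ℕ) (g : ℕ → ℝ → ℝ) {a b c : ℝ}
    (hab : a ≤ b) (hcont : ∀ j ≤ n, ContinuousOn (g j) (Icc a b))
    (hderiv : ∀ j ≤ n, ∀ x ∈ Ioo a b, HasDerivAt (g j) (g (j + 1) x) x)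
    (hzero : ∀ j, 1 ≤ j → j ≤ n → g j a = 0) (hlow : ∀ x ∈ Ioo a b, c ≤ g (n + 1) x) :
    c * (b - a) ^ (n + 1) / (n + 1)! ≤ g 0 b - g 0 a := by
  induction n generalizing g b with
  | zero =>
    refine mul_pow_div_factorial_le_sub_of_hasDerivAt 0 hab (hcont 0 le_rfl) (hderiv 0 le_rfl)
      fun x hx => ?_
    simpa using hlow x hx
  | succ n ih =>
    refine mul_pow_div_factorial_le_sub_of_hasDerivAt (n + 1) hab (hcont 0 (Nat.zero_le _))
      (hderiv 0 (Nat.zero_le _)) fun x hx => ?_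
    have hsub : Icc a x ⊆ Icc a b := Icc_subset_Icc_right hx.2.le
    have hsub' : Ioo a x ⊆ Ioo a b := Ioo_subset_Ioo_right hx.2.le
    have := ih (fun j => g (j + 1)) hx.1.le (fun j hj => (hcont (j + 1) (by omega)).mono hsub)
      (fun j hj y hy => hderiv (j + 1) (by omega) y (hsub' hy))
      (fun j h1 h2 => hzero (j + 1) (by omega) (by omega)) (fun y hy => hlow y (hsub' hy))
    rwa [hzero 1 le_rfl (by omega), sub_zero] at this

lemma mul_abs_pow_div_factorial_le_abs_sub_of_hasDerivAt_chain (g : ℕ → ℝ → ℝ) {a δ c x : ℝ}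
    (n : ℕ) (hcont : ∀ j ≤ n, ContinuousOn (g j) (Icc (a - δ) (a + δ)))
    (hderiv : ∀ j ≤ n, ∀ y ∈ Ioo (a - δ) (a + δ), HasDerivAt (g j) (g (j + 1) y) y)
    (hzero : ∀ j, 1 ≤ j → j ≤ n → g j a = 0)
    (hlow : ∀ y ∈ Ioo (a - δ) (a + δ), c ≤ g (n + 1) y) (hx : x ∈ Icc (a - δ) (a + δ)) :
    c * |x - a| ^ (n + 1) / (n + 1)! ≤ |g 0 x - g 0 a| := by
  rcases le_total a x with hax | hxa
  · have hI : Icc a x ⊆ Icc (a - δ) (a + δ) := Icc_subset_Icc (by linarith [hx.1, hx.2]) hx.2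
    have hO : Ioo a x ⊆ Ioo (a - δ) (a + δ) := Ioo_subset_Ioo (by linarith [hx.1, hx.2]) hx.2
    have := mul_pow_div_factorial_le_sub_of_hasDerivAt_chain n g hax
      (fun j hj => (hcont j hj).mono hI) (fun j hj y hy => hderiv j hj y (hO hy)) hzero
      (fun y hy => hlow y (hO hy))
    rw [abs_of_nonneg (sub_nonneg.2 hax)]
    exact this.trans (le_abs_self _)
  · -- reflect `y ↦ -y`, with signs chosen so that the top function is again `g (n + 1)`
    set g' : ℕ → ℝ → ℝ := fun j y => (-1) ^ (n + 1) * ((-1) ^ j * g j (-y))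
    have hI : ∀ y ∈ Icc (-a) (-x), -y ∈ Icc (a - δ) (a + δ) := fun y hy =>
      ⟨by linarith [hx.1, hy.2], by linarith [hx.1, hx.2, hy.1]⟩
    have hO : ∀ y ∈ Ioo (-a) (-x), -y ∈ Ioo (a - δ) (a + δ) := fun y hy =>
      ⟨by linarith [hx.1, hy.2], by linarith [hx.1, hx.2, hy.1]⟩
    have := mul_pow_div_factorial_le_sub_of_hasDerivAt_chain n g' (neg_le_neg hxa)
      (fun j hj => continuousOn_const.mul (continuousOn_const.mul
        ((hcont j hj).comp continuousOn_neg hI)))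
      (fun j hj y hy => by
        have h := (((hderiv j hj (-y) (hO y hy)).comp y (hasDerivAt_neg y)).const_mul
          ((-1 : ℝ) ^ j)).const_mul ((-1 : ℝ) ^ (n + 1))
        refine h.congr_deriv ?_
        simp only [g', pow_succ]
        ring)
      (fun j h1 h2 => by simp [g', hzero j h1 h2])
      (fun y hy => by
        simpa [g', ← mul_assoc, ← mul_pow] using hlow (-y) (hO y hy))
    rw [abs_of_nonpos (sub_nonpos.2 hxa), neg_sub]
    simp only [g', neg_neg, pow_zero, one_mul, ← mul_sub, sub_neg_eq_add, neg_add_eq_sub] at this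
    refine this.trans ((le_abs_self _).trans ?_)
    rw [abs_mul, abs_pow, abs_neg, abs_one, one_pow, one_mul]

lemma hasDerivAt_iteratedDerivWithin_Icc {f : ℝ → ℝ} {a b x : ℝ} {j : ℕ}
    (hd : DifferentiableOn ℝ (iteratedDerivWithin j f (Icc a b)) (Icc a b)) (hx : x ∈ Ioo a b) :
    HasDerivAt (iteratedDerivWithin j f (Icc a b))
      (iteratedDerivWithin (j + 1) f (Icc a b) x) x := by
  have hI : Icc a b ∈ 𝓝 x := Icc_mem_nhds hx.1 hx.2
  rw [iteratedDerivWithin_succ, derivWithin_of_mem_nhds hI]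
  exact ((hd x (Ioo_subset_Icc_self hx)).differentiableAt hI).hasDerivAt

lemma exists_pos_eventually_mul_abs_pow_le_abs_sub {f : ℝ → ℝ} {x₀ γ : ℝ} {p : ℕ} (hγ : 0 < γ)
    (hd : ∀ j ≤ p, DifferentiableOn ℝ (iteratedDerivWithin j f (Icc (x₀ - γ) (x₀ + γ)))
      (Icc (x₀ - γ) (x₀ + γ)))
    (hz : ∀ j, 1 ≤ j → j ≤ p → iteratedDerivWithin j f (Icc (x₀ - γ) (x₀ + γ)) x₀ = 0)
    (hA : iteratedDerivWithin (p + 1) f (Icc (x₀ - γ) (x₀ + γ)) x₀ ≠ 0)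
    (hcont : ContinuousAt (iteratedDerivWithin (p + 1) f (Icc (x₀ - γ) (x₀ + γ))) x₀) :
    ∃ c > 0, ∀ᶠ x in 𝓝 x₀, c * |x - x₀| ^ (p + 1) ≤ |f x - f x₀| := by
  set I := Icc (x₀ - γ) (x₀ + γ)
  set A := iteratedDerivWithin (p + 1) f I x₀
  obtain ⟨κ, hκ, hκA⟩ : ∃ κ : ℝ, |κ| = 1 ∧ 0 < κ * A := by
    rcases hA.lt_or_gt with h | h
    exacts [⟨-1, by simp, by linarith⟩, ⟨1, by simp, by linarith⟩]
  have htop : ∀ᶠ y in 𝓝 x₀, κ * A / 2 < κ * iteratedDerivWithin (p + 1) f I y :=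
    (hcont.const_mul κ).eventually_const_lt (half_lt_self hκA)
  obtain ⟨ε, hε, hball⟩ := Metric.mem_nhds_iff.1 (htop.and (Icc_mem_nhds
    (by linarith : x₀ - γ < x₀) (by linarith : x₀ < x₀ + γ)))
  rw [Real.ball_eq_Ioo] at hball
  have hsub : Icc (x₀ - ε / 2) (x₀ + ε / 2) ⊆ Ioo (x₀ - ε) (x₀ + ε) :=
    Icc_subset_Ioo (by linarith) (by linarith)
  have hsubI : Icc (x₀ - ε / 2) (x₀ + ε / 2) ⊆ I := fun y hy => (hball (hsub hy)).2
  have hsubIoo : Ioo (x₀ - ε) (x₀ + ε) ⊆ Ioo (x₀ - γ) (x₀ + γ) :=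
    interior_Icc (a := x₀ - γ) ▸ interior_maximal (fun y hy => (hball hy).2) isOpen_Ioo
  refine ⟨κ * A / 2 / (p + 1)!, by positivity, ?_⟩
  filter_upwards [Icc_mem_nhds (by linarith : x₀ - ε / 2 < x₀) (by linarith : x₀ < x₀ + ε / 2)]
    with x hx
  have := mul_abs_pow_div_factorial_le_abs_sub_of_hasDerivAt_chain
    (fun j => (κ * iteratedDerivWithin j f I ·)) p
    (fun j hj => ((hd j hj).continuousOn.mono hsubI).const_smul κ)
    (fun j hj y hy => (hasDerivAt_iteratedDerivWithin_Icc (hd j hj)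
      (hsubIoo (hsub (Ioo_subset_Icc_self hy)))).const_mul κ)
    (fun j h1 h2 => by simp [hz j h1 h2])
    (fun y hy => (hball (hsub (Ioo_subset_Icc_self hy))).1.le) hx
  simpa [iteratedDerivWithin_zero, ← mul_sub, abs_mul, hκ, div_mul_eq_mul_div] using this

lemma exists_pos_mul_abs_pow_le_abs_sub_of_eventually {f : ℝ → ℝ} {x₀ γ c : ℝ} {n : ℕ}
    (hγ : 0 < γ) (hf : ContinuousOn f (Icc (x₀ - γ) (x₀ + γ)))
    (hinj : ∀ x ∈ Icc (x₀ - γ) (x₀ + γ), f x = f x₀ → x = x₀) (hc : 0 < c)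
    (hloc : ∀ᶠ x in 𝓝 x₀, c * |x - x₀| ^ n ≤ |f x - f x₀|) :
    ∃ c' > 0, ∀ x ∈ Icc (x₀ - γ) (x₀ + γ), c' * |x - x₀| ^ n ≤ |f x - f x₀| := by
  obtain ⟨δ, hδ, hδloc⟩ := Metric.eventually_nhds_iff.1 hloc
  set K := Icc (x₀ - γ) (x₀ + γ) ∩ {x | δ ≤ |x - x₀|}
  have hK : IsCompact K := isCompact_Icc.inter_right (isClosed_le continuous_const (by fun_prop))
  obtain ⟨M, hM, hMK⟩ := hK.exists_forall_le' (a := 0)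
    (((hf.mono inter_subset_left).sub continuousOn_const).abs) fun x hx => by
      refine abs_pos.2 (sub_ne_zero.2 fun h => ?_)
      have hδx : δ ≤ |x - x₀| := hx.2
      rw [hinj x hx.1 h, sub_self, abs_zero] at hδx
      linarith
  refine ⟨min c (M / γ ^ n), by positivity, fun x hx => ?_⟩
  rcases lt_or_ge |x - x₀| δ with hnear | hfar
  · exact (mul_le_mul_of_nonneg_right (min_le_left _ _) (by positivity)).trans
      (hδloc (by rwa [Real.dist_eq]))
  · have hxγ : |x - x₀| ≤ γ := abs_sub_le_iff.2 ⟨by linarith [hx.2], by linarith [hx.1]⟩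
    calc min c (M / γ ^ n) * |x - x₀| ^ n ≤ M / γ ^ n * γ ^ n :=
          mul_le_mul (min_le_right _ _) (pow_le_pow_left₀ (abs_nonneg _) hxγ n) (by positivity)
            (by positivity)
      _ = M := div_mul_cancel₀ _ (by positivity)
      _ ≤ |f x - f x₀| := hMK x ⟨hx, hfar⟩

namespace CriticalRootStructure

variable {μ : ℝ → ℝ} {m : ℝ} {k : ℕ} {t : ℕ → ℝ} {v : ℕ → ℕ} {γ : ℝ}

theorem extRoots_lt_succ (hcrs : CriticalRootStructure μ m k t v γ) {i : ℕ} (hi : i ≤ k) :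
    extRoots k t i < extRoots k t (i + 1) := by
  have hk := hcrs.k_pos
  unfold extRoots
  split_ifs with h0 <;> try contradiction
  · subst h0
    exact hcrs.first_pos
  · omega
  · exact hcrs.mono i (i + 1) (by omega) (by omega) ‹_›
  · obtain rfl : i = k := by omega
    exact hcrs.last_lt

theorem gamma_pos (hcrs : CriticalRootStructure μ m k t v γ) : 0 < γ := by
  rw [hcrs.gamma_eq]
  exact mul_pos one_half_pos ((Finset.lt_inf'_iff _).2 fun i hi =>
    sub_pos.2 (hcrs.extRoots_lt_succ (Finset.mem_Icc.1 hi).2))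

theorem continuousOn_Icc (hcrs : CriticalRootStructure μ m k t v γ) {l : ℕ} (hl1 : 1 ≤ l)
    (hlk : l ≤ k) : ContinuousOn μ (Icc (t l - γ) (t l + γ)) := by
  simpa only [iteratedDerivWithin_zero] using
    (hcrs.diffble l hl1 hlk 0 (Nat.zero_le _)).continuousOn

theorem eq_of_apply_eq (hcrs : CriticalRootStructure μ m k t v γ) {l : ℕ} (hl1 : 1 ≤ l)
    (hlk : l ≤ k) {x : ℝ} (hx : x ∈ Icc (t l - γ) (t l + γ)) (hμx : μ x = μ (t l)) : x = t l := by
  have hγ := hcrs.gamma_pos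
  rcases le_total x (t l) with h | h
  · exact (hcrs.mono_left l hl1 hlk).elim StrictMonoOn.injOn StrictAntiOn.injOn ⟨hx.1, h⟩
      ⟨by linarith, le_rfl⟩ hμx
  · exact (hcrs.mono_right l hl1 hlk).elim StrictMonoOn.injOn StrictAntiOn.injOn ⟨h, hx.2⟩
      ⟨le_rfl, by linarith⟩ hμx

theorem exists_pos_mul_abs_pow_le (hcrs : CriticalRootStructure μ m k t v γ) {l n : ℕ}
    (hl1 : 1 ≤ l) (hlk : l ≤ k) (hn : v l + 1 ≤ n) :
    ∃ c > 0, ∀ x ∈ Icc (t l - γ) (t l + γ), c * |x - t l| ^ n ≤ |μ x - m| := by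
  have hγ := hcrs.gamma_pos
  obtain ⟨C, hC⟩ := hcrs.deriv_lip l hl1 hlk
  obtain ⟨c, hc, hloc⟩ := exists_pos_eventually_mul_abs_pow_le_abs_sub hγ
    (hcrs.diffble l hl1 hlk) (hcrs.deriv_zero l hl1 hlk) (hcrs.deriv_ne l hl1 hlk)
    (hC.continuousOn.continuousAt (Icc_mem_nhds (by linarith) (by linarith)))
  -- near the root `|x - t l| ≤ 1`, so raising the exponent only weakens the bound
  have hloc' : ∀ᶠ x in 𝓝 (t l), c * |x - t l| ^ n ≤ |μ x - μ (t l)| := by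
    filter_upwards [hloc, Metric.closedBall_mem_nhds (t l) one_pos] with x hx hx1
    exact (mul_le_mul_of_nonneg_left (pow_le_pow_of_le_one (abs_nonneg _) hx1 hn) hc.le).trans hx
  simpa only [hcrs.root l hl1 hlk] using exists_pos_mul_abs_pow_le_abs_sub_of_eventually hγ
    (hcrs.continuousOn_Icc hl1 hlk) (fun x hx => hcrs.eq_of_apply_eq hl1 hlk hx) hc hloc'

theorem exists_pos_forall_mul_abs_pow_le (hcrs : CriticalRootStructure μ m k t v γ) :
    ∃ c > 0, ∀ l ∈ Finset.Icc 1 k, ∀ x ∈ Icc (t l - γ) (t l + γ),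
      c * |x - t l| ^ ((Finset.Icc 1 k).sup v + 1) ≤ |μ x - m| := by
  have hsmall : ∀ l ∈ Finset.Icc 1 k, ∀ᶠ c in 𝓝[>] (0 : ℝ), ∀ x ∈ Icc (t l - γ) (t l + γ),
      c * |x - t l| ^ ((Finset.Icc 1 k).sup v + 1) ≤ |μ x - m| := by
    intro l hl
    obtain ⟨hl1, hlk⟩ := Finset.mem_Icc.1 hl
    obtain ⟨c, hc, hbound⟩ :=
      hcrs.exists_pos_mul_abs_pow_le hl1 hlk (Nat.succ_le_succ (Finset.le_sup hl))
    filter_upwards [Ioo_mem_nhdsGT hc] with c' hc' x hx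
    exact (mul_le_mul_of_nonneg_right hc'.2.le (by positivity)).trans (hbound x hx)
  obtain ⟨c, hbound, hc⟩ := (((eventually_all_finset _).2 hsmall).and self_mem_nhdsWithin).exists
  exact ⟨c, hc, hbound⟩

theorem exists_pos_exists_mul_abs_pow_le_of_abs_sub_lt (hcrs : CriticalRootStructure μ m k t v γ) :
    ∃ c > 0, ∃ ε > 0, ∀ s ∈ Icc (0 : ℝ) 1, |μ s - m| < ε →
      ∃ l ∈ Finset.Icc 1 k, c * |s - t l| ^ ((Finset.Icc 1 k).sup v + 1) ≤ |μ s - m| := by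
  obtain ⟨c, hc, hbound⟩ := hcrs.exists_pos_forall_mul_abs_pow_le
  obtain ⟨ε, hε, hsep⟩ := hcrs.sep
  refine ⟨c, hc, ε, hε, fun s hs hsε => ?_⟩
  obtain ⟨l, hl1, hlk, hl⟩ : ∃ l, 1 ≤ l ∧ l ≤ k ∧ |s - t l| ≤ γ := by
    by_contra! hfar
    exact (hsep s hs hfar).not_gt hsε
  rw [abs_sub_comm, mem_Icc_iff_abs_le] at hl
  exact ⟨l, Finset.mem_Icc.2 ⟨hl1, hlk⟩, hbound l (Finset.mem_Icc.2 ⟨hl1, hlk⟩) s hl⟩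

end CriticalRootStructure

theorem le_div_rpow_of_mul_pow_le {x y c : ℝ} {n : ℕ} (hx : 0 ≤ x) (hc : 0 < c)
    (h : c * x ^ (n + 1) ≤ y) : x ≤ (y / c) ^ (1 / ((n : ℝ) + 1)) := by
  have hy : 0 ≤ y / c := div_nonneg ((by positivity : 0 ≤ c * x ^ (n + 1)).trans h) hc.le
  rw [one_div, Real.le_rpow_inv_iff_of_pos hx hy (by positivity), le_div_iff₀ hc]
  exact_mod_cast (mul_comm c _) ▸ h

theorem card_filter_abs_div_sub_le (s : Finset ℕ) {N : ℕ} (hN : 0 < N) (a : ℝ) {R : ℝ}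
    (hR : 0 ≤ R) : (#(s.filter fun i : ℕ => |(i : ℝ) / N - a| ≤ R) : ℝ) ≤ 2 * N * R + 1 := by
  have hN' : (0 : ℝ) < N := by exact_mod_cast hN
  have hsub : #(s.filter fun i : ℕ => |(i : ℝ) / N - a| ≤ R) ≤
      #(Finset.Icc ⌈N * (a - R)⌉ ⌊N * (a + R)⌋) := by
    refine Finset.card_le_card_of_injOn (fun i : ℕ => (i : ℤ)) (fun i hi => ?_)
      (fun i _ j _ h => Nat.cast_injective h)
    obtain ⟨hlo, hhi⟩ := abs_le.1 (Finset.mem_filter.1 hi).2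
    have hlo' : (N : ℝ) * (a - R) ≤ i := (le_div_iff₀' hN').1 (by linarith)
    have hhi' : (i : ℝ) ≤ N * (a + R) := (div_le_iff₀' hN').1 (by linarith)
    simp only [Finset.coe_Icc, mem_Icc, Int.ceil_le, Int.le_floor, Int.cast_natCast]
    exact ⟨hlo', hhi'⟩
  have hIcc : ((#(Finset.Icc ⌈N * (a - R)⌉ ⌊N * (a + R)⌋) : ℤ) : ℝ) ≤ 2 * N * R + 1 := by
    rw [Int.card_Icc, Int.toNat_eq_max]
    push_cast
    refine max_le ?_ (by positivity)
    linarith [Int.floor_le ((N : ℝ) * (a + R)), Int.le_ceil ((N : ℝ) * (a - R))]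
  calc (#(s.filter fun i : ℕ => |(i : ℝ) / N - a| ≤ R) : ℝ)
      ≤ #(Finset.Icc ⌈N * (a - R)⌉ ⌊N * (a + R)⌋) := by exact_mod_cast hsub
    _ ≤ 2 * N * R + 1 := by exact_mod_cast hIcc

/-- equation (B.17): the number of grid points `i/N` in the `h`-band of
the level set is at most `C·(N·h^{1/(v+1)} + 1)`. -/
theorem grid_point_count_in_band
    (μ : ℝ → ℝ) (m : ℝ) (k : ℕ) (t : ℕ → ℝ) (v : ℕ → ℕ) (γ : ℝ)
    (hcrs : CriticalRootStructure μ m k t v γ) :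
    ∃ C > (0:ℝ), ∃ h₀ > (0:ℝ), ∀ h ∈ Ioc (0:ℝ) h₀, ∀ N : ℕ, 1 ≤ N →
      (((Finset.Icc 1 N).filter
          (fun i : ℕ => |μ ((i:ℝ) / (N:ℝ)) - m| ≤ h)).card : ℝ) ≤
        C * ((N:ℝ) * h ^ ((1:ℝ) / ((((Finset.Icc 1 k).sup v : ℕ) : ℝ) + 1)) + 1) := by
  obtain ⟨c, hc, ε, hε, hnear⟩ := hcrs.exists_pos_exists_mul_abs_pow_le_of_abs_sub_lt
  set α : ℝ := 1 / (((Finset.Icc 1 k).sup v : ℕ) + 1)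
  have hk : (0 : ℝ) < k := by exact_mod_cast hcrs.k_pos
  refine ⟨k * (2 / c ^ α + 1), by positivity, ε / 2, by positivity, fun h ⟨hh, hhε⟩ N hN => ?_⟩
  have hsub : (Finset.Icc 1 N).filter (fun i : ℕ => |μ ((i:ℝ) / (N:ℝ)) - m| ≤ h) ⊆
      (Finset.Icc 1 k).biUnion fun l =>
        (Finset.Icc 1 N).filter fun i : ℕ => |(i : ℝ) / N - t l| ≤ (h / c) ^ α := by
    intro i hi
    obtain ⟨hiN, hband⟩ := Finset.mem_filter.1 hi
    have hgrid : (i : ℝ) / N ∈ Icc (0 : ℝ) 1 := ⟨by positivity,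
      div_le_one_of_le₀ (by exact_mod_cast (Finset.mem_Icc.1 hiN).2) (Nat.cast_nonneg _)⟩
    obtain ⟨l, hl, hbound⟩ := hnear _ hgrid (by linarith)
    exact Finset.mem_biUnion.2 ⟨l, hl, Finset.mem_filter.2
      ⟨hiN, le_div_rpow_of_mul_pow_le (abs_nonneg _) hc (hbound.trans hband)⟩⟩
  calc (((Finset.Icc 1 N).filter (fun i : ℕ => |μ ((i:ℝ) / (N:ℝ)) - m| ≤ h)).card : ℝ)
      ≤ ∑ l ∈ Finset.Icc 1 k,
          (((Finset.Icc 1 N).filter fun i : ℕ => |(i : ℝ) / N - t l| ≤ (h / c) ^ α).card : ℝ) := by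
        exact_mod_cast (Finset.card_le_card hsub).trans Finset.card_biUnion_le
    _ ≤ ∑ l ∈ Finset.Icc 1 k, (2 * N * (h / c) ^ α + 1) :=
        Finset.sum_le_sum fun l _ => card_filter_abs_div_sub_le _ hN _ (by positivity)
    _ = k * (2 / c ^ α * (N * h ^ α) + 1) := by
        rw [Finset.sum_const, Nat.card_Icc, nsmul_eq_mul, Real.div_rpow hh.le hc.le]
        push_cast
        ring
    _ ≤ k * (2 / c ^ α + 1) * (N * h ^ α + 1) := by
        have : 0 ≤ 2 / c ^ α := by positivity
        have : 0 ≤ (N : ℝ) * h ^ α := by positivity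
        nlinarith
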